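/- arXiv:2204.12232 — 2 statements merged into one kernel-verified Lean document; each statement's English description precedes it below -/
import Mathlib

section
/- Let Γ be an open convex cone in ℝⁿ with vertex at the origin that contains the positive orthant Γₙ = {λ ∈ ℝⁿ : λᵢ > 0 for all i}, is invariant under permutations of coordinates, and is proper (Γ ≠ ℝⁿ). Then Γ is contained in the half-space {λ ∈ ℝⁿ : λ₁ + ⋯ + λₙ > 0}. -/
/-- An open convex symmetric proper cone in ℝⁿ containing the positive orthant
is contained in the half-space `{λ | ∑ λᵢ > 0}`. -/
theorem stmt_0 (n : ℕ) (Γ : Set (Fin n → ℝ))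
    (hopen : IsOpen Γ) (hconv : Convex ℝ Γ)
    (hcone : ∀ x ∈ Γ, ∀ c : ℝ, 0 < c → c • x ∈ Γ)
    (hsym : ∀ (σ : Equiv.Perm (Fin n)), ∀ x ∈ Γ, (x ∘ σ) ∈ Γ)
    (horth : {x : Fin n → ℝ | ∀ i, 0 < x i} ⊆ Γ)
    (hproper : Γ ≠ Set.univ) :
    ∀ x ∈ Γ, 0 < ∑ i, x i := by
  intro x hx
  by_contra hs
  push_neg at hs
  rcases Nat.eq_zero_or_pos n with hn | hn
  · subst hn
    exact hproper (Set.eq_univ_of_forall fun z => horth fun i => i.elim0)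
  haveI : NeZero n := ⟨hn.ne'⟩
  -- shrink x slightly to make the sum strictly negative
  obtain ⟨ε, hε, hball⟩ := Metric.isOpen_iff.mp hopen x hx
  set x' : Fin n → ℝ := fun i => x i - ε / 2 with hx'def
  have hx' : x' ∈ Γ := by
    apply hball
    rw [Metric.mem_ball, dist_pi_lt_iff hε]
    intro i
    simp only [hx'def, Real.dist_eq, sub_sub_cancel_left, abs_neg, abs_div]
    rw [abs_of_pos hε]
    norm_num [hε]
  have hs' : ∑ i, x' i < 0 := by
    have : ∑ i, x' i = (∑ i, x i) - n * (ε / 2) := by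
      simp [hx'def, Finset.sum_sub_distrib, mul_comm]
    rw [this]
    have : (0:ℝ) < n * (ε / 2) := by positivity
    linarith
  -- average x' over cyclic rotations: constant vector with value (∑ x')/n
  set c : ℝ := (∑ i, x' i) / n with hcdef
  have hc : c < 0 := div_neg_of_neg_of_pos hs' (by exact_mod_cast hn)
  have hw : (fun _ : Fin n => c) ∈ Γ := by
    have hmem : ∑ k : Fin n, ((n : ℝ)⁻¹) • (x' ∘ Equiv.addRight k) ∈ Γ := by
      apply hconv.sum_mem
      · intro k _; positivity
      · rw [Finset.sum_const, Finset.card_univ, Fintype.card_fin, nsmul_eq_mul]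
        field_simp
      · intro k _; exact hsym _ _ hx'
    have heq : (∑ k : Fin n, ((n : ℝ)⁻¹) • (x' ∘ Equiv.addRight k)) = fun _ => c := by
      funext i
      simp only [Finset.sum_apply, Pi.smul_apply, Function.comp_apply, Equiv.coe_addRight,
        smul_eq_mul]
      rw [← Finset.mul_sum]
      have : ∑ k : Fin n, x' (i + k) = ∑ j, x' j := Equiv.sum_comp (Equiv.addLeft i) x'
      rw [this, hcdef]
      ring
    rwa [heq] at hmem
  -- now Γ = univ, contradiction
  apply hproper
  apply Set.eq_univ_of_forall
  intro z
  set M : ℝ := 1 + ∑ i, |z i / c| with hMdef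
  have hM : 0 < M := by positivity
  have hu : (fun i => z i - M * c) ∈ Γ := by
    apply horth
    intro i
    have h1 : z i / c ≤ ∑ j, |z j / c| := by
      calc z i / c ≤ |z i / c| := le_abs_self _
        _ ≤ ∑ j, |z j / c| :=
          Finset.single_le_sum (f := fun j => |z j / c|) (fun j _ => abs_nonneg _)
            (Finset.mem_univ i)
    have h2 : z i / c < M := by rw [hMdef]; linarith
    have h3 := (div_lt_iff_of_neg hc).mp h2
    show 0 < z i - M * c
    linarith
  have hMw : M • (fun _ : Fin n => c) ∈ Γ := hcone _ hw M hM
  have hmid : (1/2 : ℝ) • (fun i => z i - M * c) + (1/2 : ℝ) • (M • fun _ : Fin n => c) ∈ Γ :=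
    hconv hu hMw (by norm_num) (by norm_num) (by norm_num)
  have := hcone _ hmid 2 (by norm_num)
  convert this using 1
  funext i
  simp [Pi.smul_apply]
  ring
end

section
/- Let Γ ⊆ ℝⁿ be an open convex cone containing the positive orthant, and let f : Γ → ℝ be concave with ∂f/∂λₙ > 0 (more weakly: f nondecreasing in the last coordinate). Define f_∞(λ') = lim_{s→∞} f(λ', s) ∈ ℝ ∪ {+∞} for λ' ∈ Γ_∞ (the projection of Γ onto the first n−1 coordinates). Then either f_∞(λ') = +∞ for every λ' ∈ Γ_∞, or f_∞(λ') < +∞ for every λ' ∈ Γ_∞. -/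
open Filter

/-!
If some slice `s ↦ f (λ'₀, s)` does not tend to `+∞`, monotonicity bounds it by some `M`.
For any other `λ'`, take `θ ∈ (0, 1)` so small that `z = (1 - θ)⁻¹ ((λ'₀, s₀) - θ (λ', 0))`
still lies in the open cone `Γ`. Then `θ (λ', s) + (1 - θ) z = (λ'₀, s₀ + θ s)`, so concavity
gives `θ f (λ', s) + (1 - θ) f z ≤ M`, a bound uniform in `s`. Monotonicity can be applied
along slices because `Γ + ℝ≥0 eₙ ⊆ Γ`, `eₙ` being in the closure of `Γ`.
-/

section ConvexCone

variable {E : Type*} [AddCommGroup E] [Module ℝ E] [TopologicalSpace E] [IsTopologicalAddGroup E]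
  [ContinuousSMul ℝ E] {Γ : Set E}

theorem Convex.add_smul_mem_of_mem_closure (hopen : IsOpen Γ) (hconv : Convex ℝ Γ)
    (hcone : ∀ x ∈ Γ, ∀ c : ℝ, 0 < c → c • x ∈ Γ) {x e : E} (hx : x ∈ Γ) (he : e ∈ closure Γ)
    {t : ℝ} (ht : 0 ≤ t) : x + t • e ∈ Γ := by
  have hpos : (0 : ℝ) < 1 + t := by linarith
  have hcomb := hconv.combo_interior_closure_mem_interior (hopen.interior_eq.symm ▸ hx) he
    (inv_pos.2 hpos) (div_nonneg ht hpos.le) (by field_simp)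
  rw [hopen.interior_eq] at hcomb
  convert hcone _ hcomb _ hpos using 1
  rw [smul_add, smul_smul, smul_smul, mul_inv_cancel₀ hpos.ne', mul_div_cancel₀ _ hpos.ne',
    one_smul]

theorem IsOpen.exists_sub_smul_mem (hopen : IsOpen Γ) {x₀ : E} (hx₀ : x₀ ∈ Γ) (x : E) :
    ∃ θ : ℝ, 0 < θ ∧ θ < 1 ∧ x₀ - θ • x ∈ Γ := by
  have hnear : ∀ᶠ θ : ℝ in nhds 0, x₀ - θ • x ∈ Γ := by
    refine (Continuous.continuousAt (by fun_prop)).eventually_mem (hopen.mem_nhds ?_)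
    simpa using hx₀
  obtain ⟨θ, ⟨hθΓ, hθ1⟩, hθ0⟩ :=
    ((hnear.and (eventually_lt_nhds one_pos)).filter_mono nhdsWithin_le_nhds).and
      (self_mem_nhdsWithin (s := Set.Ioi 0)) |>.exists
  exact ⟨θ, hθ0, hθ1, hθΓ⟩

theorem ConcaveOn.exists_bound_on_line (hopen : IsOpen Γ) (hconv : Convex ℝ Γ)
    (hcone : ∀ x ∈ Γ, ∀ c : ℝ, 0 < c → c • x ∈ Γ) {f : E → ℝ} (hconc : ConcaveOn ℝ Γ f)
    {x₀ e : E} {M : ℝ} (hx₀ : x₀ ∈ Γ) (hM : ∀ t : ℝ, x₀ + t • e ∈ Γ → f (x₀ + t • e) ≤ M)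
    (x : E) : ∃ B : ℝ, ∀ t : ℝ, x + t • e ∈ Γ → f (x + t • e) ≤ B := by
  obtain ⟨θ, hθ0, hθ1, hyΓ⟩ := hopen.exists_sub_smul_mem hx₀ x
  have h1θ : 0 < 1 - θ := sub_pos.2 hθ1
  set z := (1 - θ)⁻¹ • (x₀ - θ • x)
  have hz : z ∈ Γ := hcone _ hyΓ _ (inv_pos.2 h1θ)
  refine ⟨(M - (1 - θ) * f z) / θ, fun t ht => ?_⟩
  have hmix : θ • (x + t • e) + (1 - θ) • z = x₀ + (θ * t) • e := by
    rw [smul_inv_smul₀ h1θ.ne']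
    module
  have hconcave := hconc.2 ht hz hθ0.le h1θ.le (add_sub_cancel θ 1)
  have hbound := hM _ (hmix ▸ hconv ht hz hθ0.le h1θ.le (add_sub_cancel θ 1))
  rw [hmix, smul_eq_mul, smul_eq_mul] at hconcave
  rw [le_div_iff₀ hθ0]
  linarith

end ConvexCone

theorem MonotoneOn.exists_forall_le_of_not_tendsto_atTop {g : ℝ → ℝ} {S : Set ℝ}
    (hmono : MonotoneOn g S) (hS : IsUpperSet S)
    (hg : ¬Tendsto g atTop atTop) : ∃ M, ∀ s ∈ S, g s ≤ M := by
  rw [tendsto_atTop] at hg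
  push Not at hg
  obtain ⟨M, hM⟩ := hg
  refine ⟨M, fun s hs => ?_⟩
  obtain ⟨u, hsu, hu⟩ := frequently_atTop.mp hM s
  exact (hmono hs (hS hsu hs) hsu).trans hu.le

theorem mem_closure_setOf_pos_of_nonneg {ι : Type*} {v : ι → ℝ} (hv : 0 ≤ v) :
    v ∈ closure {x : ι → ℝ | ∀ i, 0 < x i} := by
  have : {x : ι → ℝ | ∀ i, 0 < x i} = Set.univ.pi fun _ => Set.Ioi 0 := by ext; simp
  rw [this, closure_pi_set, closure_Ioi]
  exact fun i _ => hv i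

theorem Fin.snoc_add_smul_single_last {n : ℕ} (l : Fin n → ℝ) (s t : ℝ) :
    (Fin.snoc l s : Fin (n + 1) → ℝ) + t • Pi.single (Fin.last n) 1 = Fin.snoc l (s + t) := by
  ext i
  refine Fin.lastCases ?_ (fun j => ?_) i <;> simp

/-- Trudinger's dichotomy: for a concave function `f` on an open convex cone Γ
containing the positive orthant, nondecreasing in the last coordinate, either
`f(λ', s) → +∞` as `s → ∞` for every `λ'` in the projection `Γ_∞`, or the limit
is finite (the tail is bounded) for every `λ' ∈ Γ_∞`. -/
theorem stmt_2 (n : ℕ) (Γ : Set (Fin (n + 1) → ℝ))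
    (hopen : IsOpen Γ) (hconv : Convex ℝ Γ)
    (hcone : ∀ x ∈ Γ, ∀ c : ℝ, 0 < c → c • x ∈ Γ)
    (horth : {x : Fin (n + 1) → ℝ | ∀ i, 0 < x i} ⊆ Γ)
    (f : (Fin (n + 1) → ℝ) → ℝ)
    (hconc : ConcaveOn ℝ Γ f)
    (hmono : ∀ (l : Fin n → ℝ) (s t : ℝ), s ≤ t →
      Fin.snoc l s ∈ Γ → Fin.snoc l t ∈ Γ → f (Fin.snoc l s) ≤ f (Fin.snoc l t)) :
    (∀ l : Fin n → ℝ, (∃ s : ℝ, Fin.snoc l s ∈ Γ) →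
      Tendsto (fun s : ℝ => f (Fin.snoc l s)) atTop atTop) ∨
    (∀ l : Fin n → ℝ, (∃ s : ℝ, Fin.snoc l s ∈ Γ) →
      ∃ B : ℝ, ∀ s : ℝ, Fin.snoc l s ∈ Γ → f (Fin.snoc l s) ≤ B) := by
  have he : Pi.single (Fin.last n) 1 ∈ closure Γ :=
    closure_mono horth (mem_closure_setOf_pos_of_nonneg (Pi.single_nonneg.2 zero_le_one))
  have hup (l : Fin n → ℝ) : IsUpperSet {s | (Fin.snoc l s : Fin (n + 1) → ℝ) ∈ Γ} := by
    intro s t hst hs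
    simpa only [Set.mem_ofPred_eq, Fin.snoc_add_smul_single_last, add_sub_cancel] using
      hconv.add_smul_mem_of_mem_closure hopen hcone hs he (sub_nonneg.2 hst)
  refine or_iff_not_imp_left.2 fun hnot => ?_
  push Not at hnot
  obtain ⟨l₀, ⟨s₀, hs₀⟩, hl₀⟩ := hnot
  obtain ⟨M, hM⟩ := MonotoneOn.exists_forall_le_of_not_tendsto_atTop
    (fun a ha b hb hab => hmono l₀ a b hab ha hb) (hup l₀) hl₀
  intro l _
  obtain ⟨B, hB⟩ := hconc.exists_bound_on_line hopen hconv hcone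
    (e := Pi.single (Fin.last n) 1) hs₀
    (fun t => by rw [Fin.snoc_add_smul_single_last]; exact hM (s₀ + t)) (Fin.snoc l 0)
  refine ⟨B, fun s => ?_⟩
  simpa only [Fin.snoc_add_smul_single_last, zero_add] using hB s
end
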